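/- arXiv:math/0305040 — 5 statements merged into one kernel-verified Lean document; each statement's English description precedes it below -/
import Mathlib

section
/- Let A = (a_{ij}) be a real symmetric m×m matrix with a_{ii} < 0 for all i and a_{ij} ≥ 0 for all i ≠ j, and suppose the graph on {1,…,m} with edges {i,j} whenever a_{ij} > 0 is connected. If the quadratic form x ↦ xᵀAx is negative semidefinite but not negative definite, then its kernel is one-dimensional and is spanned by a vector all of whose coordinates are strictly positive. -/
/-!
Replacing a null vector `x` of the form by `|x|` can only increase `xᵀAx`, since the off-diagonal
entries are nonnegative; so `|x|` is again a null vector, hence in the kernel of `A` by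
semidefiniteness. A nonnegative kernel vector vanishing somewhere but not everywhere is impossible:
connectivity yields `A j i > 0` with `z j = 0 < z i`, and then `(A z) j ≥ A j i * z i > 0`.
Hence `v = |x|` is a strictly positive kernel vector, and for any kernel vector `w` the vector
`w - (w i / v i) • v` is a null vector vanishing at `i`, hence zero.
-/

open Matrix

namespace Matrix

variable {n : Type*} [Fintype n] {A : Matrix n n ℝ}

theorem posSemidef_neg_of_dotProduct_mulVec_nonpos (hsymm : A.IsSymm)
    (hsemi : ∀ x : n → ℝ, x ⬝ᵥ A *ᵥ x ≤ 0) : (-A).PosSemidef :=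
  posSemidef_iff_dotProduct_mulVec.mpr
    ⟨by simpa [IsHermitian, conjTranspose_eq_transpose_of_trivial] using hsymm.eq,
      fun x => by simpa [neg_mulVec] using hsemi x⟩

theorem mulVec_eq_zero_of_dotProduct_mulVec_eq_zero (hsymm : A.IsSymm)
    (hsemi : ∀ x : n → ℝ, x ⬝ᵥ A *ᵥ x ≤ 0) {x : n → ℝ} (hx : x ⬝ᵥ A *ᵥ x = 0) :
    A *ᵥ x = 0 := by
  have h := (posSemidef_neg_of_dotProduct_mulVec_nonpos hsymm hsemi).dotProduct_mulVec_zero_iff x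
  simpa [neg_mulVec, hx] using h

theorem dotProduct_mulVec_le_abs (hoff : ∀ i j, i ≠ j → 0 ≤ A i j) (x : n → ℝ) :
    x ⬝ᵥ A *ᵥ x ≤ |x| ⬝ᵥ A *ᵥ |x| := by
  simp only [dotProduct, mulVec, Finset.mul_sum, Pi.abs_apply]
  refine Finset.sum_le_sum fun i _ => Finset.sum_le_sum fun j _ => ?_
  rcases eq_or_ne i j with rfl | hij
  · exact le_of_eq (by linear_combination (-A i i) * abs_mul_abs_self (x i))
  · have hxx : x i * x j ≤ |x i| * |x j| := (le_abs_self _).trans (abs_mul _ _).le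
    nlinarith [hoff i j hij]

theorem mulVec_abs_eq_zero (hsymm : A.IsSymm) (hoff : ∀ i j, i ≠ j → 0 ≤ A i j)
    (hsemi : ∀ x : n → ℝ, x ⬝ᵥ A *ᵥ x ≤ 0) {x : n → ℝ} (hx : x ⬝ᵥ A *ᵥ x = 0) :
    A *ᵥ |x| = 0 :=
  mulVec_eq_zero_of_dotProduct_mulVec_eq_zero hsymm hsemi <|
    le_antisymm (hsemi _) (hx ▸ dotProduct_mulVec_le_abs hoff x)

theorem pos_of_nonneg_of_mulVec_eq_zero (hsymm : A.IsSymm) (hoff : ∀ i j, i ≠ j → 0 ≤ A i j)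
    (hconn : ∀ S : Set n, S.Nonempty → Sᶜ.Nonempty → ∃ i ∈ S, ∃ j ∈ Sᶜ, 0 < A i j)
    {z : n → ℝ} (hz : 0 ≤ z) (hAz : A *ᵥ z = 0) (hz0 : z ≠ 0) (k : n) : 0 < z k := by
  by_contra hzk
  obtain ⟨i, hi, j, hj, hAij⟩ := hconn {i | 0 < z i}
    (by
      obtain ⟨i, hi⟩ := Function.ne_iff.mp hz0
      exact ⟨i, (hz i).lt_of_ne' hi⟩)
    ⟨k, hzk⟩
  have hzj : z j = 0 := le_antisymm (not_lt.mp hj) (hz j)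
  have hAji : 0 < A j i := by rwa [hsymm.apply]
  have hrow : 0 < (A *ᵥ z) j := by
    refine Finset.sum_pos' (fun l _ => ?_) ⟨i, Finset.mem_univ i, ?_⟩
    · rcases eq_or_ne l j with rfl | hlj
      · simp [hzj]
      · exact mul_nonneg (hoff j l hlj.symm) (hz l)
    · exact mul_pos hAji hi
  simp [hAz] at hrow

theorem eq_zero_of_dotProduct_mulVec_eq_zero_of_apply_eq_zero (hsymm : A.IsSymm)
    (hoff : ∀ i j, i ≠ j → 0 ≤ A i j)
    (hconn : ∀ S : Set n, S.Nonempty → Sᶜ.Nonempty → ∃ i ∈ S, ∃ j ∈ Sᶜ, 0 < A i j)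
    (hsemi : ∀ x : n → ℝ, x ⬝ᵥ A *ᵥ x ≤ 0) {x : n → ℝ} (hx : x ⬝ᵥ A *ᵥ x = 0) {k : n}
    (hxk : x k = 0) : x = 0 := by
  by_contra hx0
  have hpos := pos_of_nonneg_of_mulVec_eq_zero hsymm hoff hconn (abs_nonneg x)
    (mulVec_abs_eq_zero hsymm hoff hsemi hx) ((Pi.abs_eq_zero x).not.mpr hx0) k
  simp [hxk] at hpos

end Matrix

theorem kernel_of_connected_negSemidef_general {m : ℕ} (A : Matrix (Fin m) (Fin m) ℝ)
    (hsymm : A.IsSymm)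
    (hoff : ∀ i j, i ≠ j → 0 ≤ A i j)
    (hconn : ∀ S : Set (Fin m), S.Nonempty → Sᶜ.Nonempty →
      ∃ i ∈ S, ∃ j ∈ Sᶜ, 0 < A i j)
    (hsemi : ∀ x : Fin m → ℝ, x ⬝ᵥ A.mulVec x ≤ 0)
    (hnotdef : ∃ x : Fin m → ℝ, x ≠ 0 ∧ x ⬝ᵥ A.mulVec x = 0) :
    ∃ v : Fin m → ℝ, (∀ i, 0 < v i) ∧ A.mulVec v = 0 ∧
      ∀ w : Fin m → ℝ, A.mulVec w = 0 → ∃ c : ℝ, w = c • v := by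
  obtain ⟨x, hx0, hx⟩ := hnotdef
  have hAv : A *ᵥ |x| = 0 := mulVec_abs_eq_zero hsymm hoff hsemi hx
  have hv : ∀ i, 0 < |x| i := pos_of_nonneg_of_mulVec_eq_zero hsymm hoff hconn (abs_nonneg x)
    hAv ((Pi.abs_eq_zero x).not.mpr hx0)
  obtain ⟨k, -⟩ := Function.ne_iff.mp hx0
  refine ⟨|x|, hv, hAv, fun w hw => ⟨w k / |x| k, ?_⟩⟩
  have hAu : A *ᵥ (w - (w k / |x| k) • |x|) = 0 := by
    rw [mulVec_sub, mulVec_smul, hw, hAv, smul_zero, sub_zero]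
  have huk : (w - (w k / |x| k) • |x|) k = 0 := by
    rw [Pi.sub_apply, Pi.smul_apply, smul_eq_mul, div_mul_cancel₀ _ (hv k).ne', sub_self]
  exact sub_eq_zero.mp <| eq_zero_of_dotProduct_mulVec_eq_zero_of_apply_eq_zero hsymm hoff hconn
    hsemi (by rw [hAu, dotProduct_zero]) huk

/-- Perron–Frobenius-type statement: a symmetric matrix with negative diagonal,
nonnegative off-diagonal entries and connected support graph whose quadratic
form is negative semidefinite but not negative definite has one-dimensional
kernel spanned by a strictly positive vector. -/
theorem kernel_of_connected_negSemidef {m : ℕ} (A : Matrix (Fin m) (Fin m) ℝ)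
    (hsymm : A.IsSymm)
    (hdiag : ∀ i, A i i < 0)
    (hoff : ∀ i j, i ≠ j → 0 ≤ A i j)
    (hconn : ∀ S : Set (Fin m), S.Nonempty → Sᶜ.Nonempty →
      ∃ i ∈ S, ∃ j ∈ Sᶜ, 0 < A i j)
    (hsemi : ∀ x : Fin m → ℝ, x ⬝ᵥ A.mulVec x ≤ 0)
    (hnotdef : ∃ x : Fin m → ℝ, x ≠ 0 ∧ x ⬝ᵥ A.mulVec x = 0) :
    ∃ v : Fin m → ℝ, (∀ i, 0 < v i) ∧ A.mulVec v = 0 ∧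
      ∀ w : Fin m → ℝ, A.mulVec w = 0 → ∃ c : ℝ, w = c • v :=
  kernel_of_connected_negSemidef_general A hsymm hoff hconn hsemi hnotdef
end

section
/- Let S be a finite set of vectors in a real vector space V with a symmetric bilinear form of signature (1, n), such that e·e < 0 for all e ∈ S and e·f ≥ 0 for all distinct e, f ∈ S. If S is minimal among subsets whose span is not negative semidefinite (i.e., S spans a subspace containing a vector of positive square, but every proper subset of S spans a negative semidefinite subspace), then S is connected: S cannot be partitioned into two nonempty subsets S₁, S₂ with e·f = 0 for all e ∈ S₁, f ∈ S₂. -/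
/-- A symmetric bilinear form of signature `(1, n)` on a real vector space:
there is an orthogonal basis with one vector of square `1` and `n` vectors of
square `-1`. -/
def IsLorentzian {V : Type*} [AddCommGroup V] [Module ℝ V]
    (n : ℕ) (B : LinearMap.BilinForm ℝ V) : Prop :=
  (∀ x y, B x y = B y x) ∧
  ∃ b : Module.Basis (Fin (n + 1)) ℝ V,
    (∀ i j, i ≠ j → B (b i) (b j) = 0) ∧
    B (b 0) (b 0) = 1 ∧ ∀ i, i ≠ 0 → B (b i) (b i) = -1

lemma span_ortho_aux {V : Type*} [AddCommGroup V] [Module ℝ V]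
    (B : LinearMap.BilinForm ℝ V) (s t : Set V)
    (h : ∀ x ∈ s, ∀ y ∈ t, B x y = 0) :
    ∀ x ∈ Submodule.span ℝ s, ∀ y ∈ Submodule.span ℝ t, B x y = 0 := by
  intro x hx
  induction hx using Submodule.span_induction with
  | mem x hxs =>
      intro y hy
      induction hy using Submodule.span_induction with
      | mem y hyt => exact h x hxs y hyt
      | zero => simp
      | add a b _ _ ha hb => simp [ha, hb]
      | smul c a _ ha => simp [ha]
  | zero => intro y hy; simp
  | add a b _ _ ha hb => intro y hy; simp [ha y hy, hb y hy]
  | smul c a _ ha => intro y hy; simp [ha y hy]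

/-- A Lanner (minimal hyperbolic) set of vectors of negative square with
pairwise nonnegative products is connected: it admits no partition into two
nonempty mutually orthogonal subsets. -/
theorem lanner_set_connected {V : Type*} [AddCommGroup V] [Module ℝ V] [DecidableEq V]
    (n : ℕ) (B : LinearMap.BilinForm ℝ V) (hB : IsLorentzian n B)
    (S : Finset V)
    (hneg : ∀ e ∈ S, B e e < 0)
    (hnn : ∀ e ∈ S, ∀ f ∈ S, e ≠ f → 0 ≤ B e f)
    (hhyp : ∃ v ∈ Submodule.span ℝ (S : Set V), 0 < B v v)
    (hmin : ∀ T : Finset V, T ⊂ S →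
      ∀ v ∈ Submodule.span ℝ (T : Set V), B v v ≤ 0) :
    ∀ S₁ S₂ : Finset V, S₁.Nonempty → S₂.Nonempty → S₁ ∪ S₂ = S →
      Disjoint S₁ S₂ → ∃ e ∈ S₁, ∃ f ∈ S₂, B e f ≠ 0 := by
  intro S₁ S₂ h1 h2 hU hD
  by_contra hcon
  push_neg at hcon
  obtain ⟨v, hv, hvpos⟩ := hhyp
  -- v ∈ span S₁ ⊔ span S₂
  have hspan : Submodule.span ℝ (S : Set V) =
      Submodule.span ℝ (S₁ : Set V) ⊔ Submodule.span ℝ (S₂ : Set V) := by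
    rw [← Submodule.span_union, ← Finset.coe_union, hU]
  rw [hspan, Submodule.mem_sup] at hv
  obtain ⟨v₁, hv₁, v₂, hv₂, rfl⟩ := hv
  have hortho := span_ortho_aux B (S₁ : Set V) (S₂ : Set V)
    (fun x hx y hy => hcon x (by exact_mod_cast hx) y (by exact_mod_cast hy))
  have h12 : B v₁ v₂ = 0 := hortho v₁ hv₁ v₂ hv₂
  have h21 : B v₂ v₁ = 0 := by rw [hB.1]; exact h12
  -- S₁ ⊂ S and S₂ ⊂ S
  obtain ⟨e₁, he₁⟩ := h1
  obtain ⟨e₂, he₂⟩ := h2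
  have hs1 : S₁ ⊂ S := by
    constructor
    · rw [← hU]; exact Finset.subset_union_left
    · intro hsub
      exact (Finset.disjoint_left.1 hD) (hsub (by rw [← hU]; exact Finset.mem_union_right _ he₂)) he₂
  have hs2 : S₂ ⊂ S := by
    constructor
    · rw [← hU]; exact Finset.subset_union_right
    · intro hsub
      exact (Finset.disjoint_right.1 hD) (hsub (by rw [← hU]; exact Finset.mem_union_left _ he₁)) he₁
  have n1 := hmin S₁ hs1 v₁ hv₁
  have n2 := hmin S₂ hs2 v₂ hv₂
  have : B (v₁ + v₂) (v₁ + v₂) ≤ 0 := by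
    simp only [map_add, LinearMap.add_apply, h12, h21]
    linarith
  linarith
end

section
/- Let V be a real vector space with a symmetric bilinear form of signature (1, n), n ≥ 1, and let 𝒮 be a set of vectors with e·e < 0 and e·f ≥ 0 for distinct e, f ∈ 𝒮. Then two disjoint Lanner subsets 𝓛₁, 𝓛₂ ⊆ 𝒮 (minimal subsets whose span contains a vector of positive square) cannot be mutually orthogonal: there exist e ∈ 𝓛₁ and f ∈ 𝓛₂ with e·f > 0. -/
lemma lorentz_expand {V : Type*} [AddCommGroup V] [Module ℝ V]
    (n : ℕ) (B : LinearMap.BilinForm ℝ V)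
    (b : Module.Basis (Fin (n + 1)) ℝ V)
    (horth : ∀ i j, i ≠ j → B (b i) (b j) = 0)
    (x y : V) :
    B x y = ∑ i, (b.repr x i) * (b.repr y i) * B (b i) (b i) := by
  conv_lhs => rw [← b.sum_repr x, ← b.sum_repr y]
  simp only [map_sum, LinearMap.sum_apply, map_smul, LinearMap.smul_apply, smul_eq_mul]
  refine Finset.sum_congr rfl fun i _ => ?_
  rw [Finset.sum_eq_single i]
  · ring
  · intro j _ hj
    simp [horth j i hj]
  · simp

lemma lorentz_key {V : Type*} [AddCommGroup V] [Module ℝ V]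
    (n : ℕ) (B : LinearMap.BilinForm ℝ V) (hB : IsLorentzian n B)
    (x y : V) (hx : 0 < B x x) (hy : 0 < B y y) : B x y ≠ 0 := by
  obtain ⟨hsymm, b, horth, h0, hneg⟩ := hB
  have key : ∀ u w : V, B u w = (b.repr u 0) * (b.repr w 0)
      - ∑ i ∈ Finset.univ.erase (0 : Fin (n+1)), (b.repr u i) * (b.repr w i) := by
    intro u w
    rw [lorentz_expand n B b horth, ← Finset.add_sum_erase _ _ (Finset.mem_univ 0), h0,
      sub_eq_add_neg, ← Finset.sum_neg_distrib]
    congr 1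
    · ring
    refine Finset.sum_congr rfl fun i hi => ?_
    rw [hneg i (Finset.ne_of_mem_erase hi)]; ring
  intro h0'
  rw [key] at hx hy h0'
  have cs := Finset.sum_mul_sq_le_sq_mul_sq (Finset.univ.erase (0 : Fin (n+1)))
    (fun i => b.repr x i) (fun i => b.repr y i)
  have hc2 : (0:ℝ) ≤ ∑ i ∈ Finset.univ.erase (0 : Fin (n+1)), (b.repr x i) ^ 2 :=
    Finset.sum_nonneg fun i _ => sq_nonneg _
  have hd2 : (0:ℝ) ≤ ∑ i ∈ Finset.univ.erase (0 : Fin (n+1)), (b.repr y i) ^ 2 :=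
    Finset.sum_nonneg fun i _ => sq_nonneg _
  have e1 : ∑ i ∈ Finset.univ.erase (0 : Fin (n+1)), b.repr x i * b.repr x i
      = ∑ i ∈ Finset.univ.erase (0 : Fin (n+1)), (b.repr x i) ^ 2 :=
    Finset.sum_congr rfl fun i _ => (pow_two _).symm
  have e2 : ∑ i ∈ Finset.univ.erase (0 : Fin (n+1)), b.repr y i * b.repr y i
      = ∑ i ∈ Finset.univ.erase (0 : Fin (n+1)), (b.repr y i) ^ 2 :=
    Finset.sum_congr rfl fun i _ => (pow_two _).symm
  rw [e1] at hx
  rw [e2] at hy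
  generalize hQ : ∑ i ∈ Finset.univ.erase (0 : Fin (n+1)), (b.repr x i) ^ 2 = Q
    at hx hc2 cs
  generalize hR : ∑ i ∈ Finset.univ.erase (0 : Fin (n+1)), (b.repr y i) ^ 2 = R
    at hy hd2 cs
  generalize hP : ∑ i ∈ Finset.univ.erase (0 : Fin (n+1)), b.repr x i * b.repr y i = P
    at h0' cs
  generalize hA : b.repr x 0 = A at hx h0'
  generalize hD : b.repr y 0 = D at hy h0'
  have hPAD : P = A * D := by linarith
  subst hPAD
  have hD2 : 0 < D * D := lt_of_le_of_lt hd2 (by linarith)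
  have h1 : Q * R ≤ Q * (D * D) := mul_le_mul_of_nonneg_left (by linarith) hc2
  have h2 : Q * (D * D) < (A * A) * (D * D) := by
    apply mul_lt_mul_of_pos_right (by linarith) hD2
  nlinarith [cs, h1, h2]

/-- Two disjoint Lanner subsets of a set of vectors with negative squares and
pairwise nonnegative products cannot be mutually orthogonal. -/
theorem lanner_subsets_not_orthogonal {V : Type*} [AddCommGroup V] [Module ℝ V]
    (n : ℕ) (hn : 1 ≤ n) (B : LinearMap.BilinForm ℝ V) (hB : IsLorentzian n B)
    (𝒮 : Set V)
    (hneg : ∀ e ∈ 𝒮, B e e < 0)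
    (hnn : ∀ e ∈ 𝒮, ∀ f ∈ 𝒮, e ≠ f → 0 ≤ B e f)
    (L₁ L₂ : Finset V) (hL1S : ↑L₁ ⊆ 𝒮) (hL2S : ↑L₂ ⊆ 𝒮)
    (hdisj : Disjoint L₁ L₂)
    (hL1 : (∃ v ∈ Submodule.span ℝ (L₁ : Set V), 0 < B v v) ∧
      ∀ T : Finset V, T ⊂ L₁ → ∀ v ∈ Submodule.span ℝ (T : Set V), B v v ≤ 0)
    (hL2 : (∃ v ∈ Submodule.span ℝ (L₂ : Set V), 0 < B v v) ∧
      ∀ T : Finset V, T ⊂ L₂ → ∀ v ∈ Submodule.span ℝ (T : Set V), B v v ≤ 0) :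
    ∃ e ∈ L₁, ∃ f ∈ L₂, 0 < B e f := by
  by_contra hcon
  push_neg at hcon
  -- all pairings are zero
  have hzero : ∀ e ∈ L₁, ∀ f ∈ L₂, B e f = 0 := by
    intro e he f hf
    have hne : e ≠ f := fun h => (Finset.disjoint_left.mp hdisj he) (h ▸ hf)
    exact le_antisymm (hcon e he f hf) (hnn e (hL1S he) f (hL2S hf) hne)
  obtain ⟨v₁, hv₁, hv₁pos⟩ := hL1.1
  obtain ⟨v₂, hv₂, hv₂pos⟩ := hL2.1
  have horth1 : ∀ f ∈ L₂, B v₁ f = 0 := by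
    intro f hf
    refine Submodule.span_induction (p := fun u _ => B u f = 0) ?_ ?_ ?_ ?_ hv₁
    · intro e he; exact hzero e he f hf
    · simp
    · intro a b _ _ ha hb; simp [ha, hb]
    · intro r a _ ha; simp [ha]
  have horth : B v₁ v₂ = 0 := by
    refine Submodule.span_induction (p := fun w _ => B v₁ w = 0) ?_ ?_ ?_ ?_ hv₂
    · intro f hf; exact horth1 f hf
    · simp
    · intro a b _ _ ha hb; simp [ha, hb]
    · intro r a _ ha; simp [ha]
  exact lorentz_key n B hB v₁ v₂ hv₁pos hv₂pos horth
end

section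
/- Let V be a real vector space with a symmetric bilinear form of signature (1, n), n ≥ 2, let V⁺ be a fixed half of the positive cone, and let N ⊆ V be a closed convex cone containing the closure of V⁺ with N ∩ (−N) = {0}. If N is finite polyhedral, then every extremal ray ℝ⁺r of N with r ∉ closure(V⁺) ∪ (−closure(V⁺)) satisfies r·r < 0, and N is generated by closure(V⁺) together with finitely many vectors of negative square. -/
open Finset

section ConeAux

variable {V : Type*} [AddCommGroup V] [Module ℝ V]

/-- The cone generated by a finite family of vectors. -/
def coneOf {ι : Type} [Fintype ι] (g : ι → V) : Set V :=
  {x | ∃ c : ι → ℝ, (∀ i, 0 ≤ c i) ∧ x = ∑ i, c i • g i}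

lemma coneOf_gen {ι : Type} [Fintype ι] (g : ι → V) (i : ι) : g i ∈ coneOf g := by
  classical
  exact ⟨fun j => if j = i then 1 else 0, fun j => by positivity, by simp [ite_smul]⟩

lemma coneOf_zero {ι : Type} [Fintype ι] (g : ι → V) : (0 : V) ∈ coneOf g :=
  ⟨0, fun i => le_refl 0, by simp⟩

lemma coneOf_add {ι : Type} [Fintype ι] {g : ι → V} {x y : V}
    (hx : x ∈ coneOf g) (hy : y ∈ coneOf g) : x + y ∈ coneOf g := by
  obtain ⟨c, hc, rfl⟩ := hx; obtain ⟨d, hd, rfl⟩ := hy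
  exact ⟨c + d, fun i => add_nonneg (hc i) (hd i), by simp [add_smul, Finset.sum_add_distrib]⟩

lemma coneOf_smul {ι : Type} [Fintype ι] {g : ι → V} {x : V} {t : ℝ}
    (ht : 0 ≤ t) (hx : x ∈ coneOf g) : t • x ∈ coneOf g := by
  obtain ⟨c, hc, rfl⟩ := hx
  exact ⟨fun i => t * c i, fun i => mul_nonneg ht (hc i),
    by rw [Finset.smul_sum]; simp [mul_smul]⟩

lemma coneOf_sum_mem {ι κ : Type} [Fintype ι] [Fintype κ] {g : ι → V} (w : κ → V)
    (c : κ → ℝ) (hc : ∀ k, 0 ≤ c k) (hw : ∀ k, w k ∈ coneOf g) :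
    ∑ k, c k • w k ∈ coneOf g := by
  classical
  exact Finset.sum_induction _ (· ∈ coneOf g) (fun a b ha hb => coneOf_add ha hb)
    (coneOf_zero g) (fun k _ => coneOf_smul (hc k) (hw k))

lemma coneOf_halfspace {ι : Type} [Fintype ι] (g : ι → V) (f : Module.Dual ℝ V) :
    ∃ (κ : Type) (_ : Fintype κ) (g' : κ → V),
      {x | x ∈ coneOf g ∧ 0 ≤ f x} = coneOf g' := by
  classical
  set φ : ι → ℝ := fun i => f (g i) with hφ
  set G : ({i : ι // 0 ≤ φ i} ⊕ ({p : ι // 0 ≤ φ p} × {q : ι // φ q < 0})) → V :=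
    Sum.elim (fun i => g i.1) (fun pq => φ pq.1.1 • g pq.2.1 + (-φ pq.2.1) • g pq.1.1) with hG
  refine ⟨_, inferInstance, G, ?_⟩
  have hGmem : ∀ k, G k ∈ coneOf g := by
    rintro (i | pq)
    · exact coneOf_gen g i.1
    · exact coneOf_add (coneOf_smul pq.1.2 (coneOf_gen g pq.2.1))
        (coneOf_smul (by linarith [pq.2.2] : (0:ℝ) ≤ -φ pq.2.1) (coneOf_gen g pq.1.1))
  have hGf : ∀ k, 0 ≤ f (G k) := by
    rintro (i | pq)
    · exact i.2
    · have : f (G (Sum.inr pq)) = 0 := by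
        simp only [hG, Sum.elim_inr, map_add, map_smul, smul_eq_mul, ← hφ]
        ring
      rw [this]
  have hPosmem : ∀ i : ι, i ∈ univ.filter (fun i => 0 ≤ φ i) ↔ 0 ≤ φ i := by simp
  have hNegmem : ∀ i : ι, i ∈ univ.filter (fun i => φ i < 0) ↔ φ i < 0 := by simp
  set Pos := univ.filter (fun i => 0 ≤ φ i) with hPosdef
  set Neg := univ.filter (fun i => φ i < 0) with hNegdef
  have hsplitR : ∀ (F : ι → ℝ),
      ∑ i, F i = ∑ i ∈ Pos, F i + ∑ i ∈ Neg, F i := by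
    intro F
    rw [← Finset.sum_filter_add_sum_filter_not univ (fun i => 0 ≤ φ i) F]
    congr 1
    apply Finset.sum_congr _ (fun _ _ => rfl)
    ext i
    rw [Finset.mem_filter, hNegmem i]
    simp [not_le]
  have hsplitV : ∀ (F : ι → V),
      ∑ i, F i = ∑ i ∈ Pos, F i + ∑ i ∈ Neg, F i := by
    intro F
    rw [← Finset.sum_filter_add_sum_filter_not univ (fun i => 0 ≤ φ i) F]
    congr 1
    apply Finset.sum_congr _ (fun _ _ => rfl)
    ext i
    rw [Finset.mem_filter, hNegmem i]
    simp [not_le]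
  ext x
  simp only [Set.mem_setOf_eq]
  constructor
  · rintro ⟨⟨c, hc, rfl⟩, hfx⟩
    have hfsum : f (∑ i, c i • g i) = ∑ i, c i * φ i := by
      rw [map_sum]; exact Finset.sum_congr rfl fun i _ => by rw [map_smul, smul_eq_mul, hφ]
    set P := ∑ i ∈ Pos, c i * φ i with hP
    set M := ∑ i ∈ Neg, c i * (-φ i) with hM
    have hPnn : 0 ≤ P := Finset.sum_nonneg fun i hi =>
      mul_nonneg (hc i) ((hPosmem i).1 hi)
    have hMnn : 0 ≤ M := Finset.sum_nonneg fun i hi =>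
      mul_nonneg (hc i) (by linarith [(hNegmem i).1 hi])
    have hPM : M ≤ P := by
      have h1 : ∑ i, c i * φ i = P - M := by
        rw [hsplitR (fun i => c i * φ i), hP, hM]
        have : ∑ i ∈ Neg, c i * (-φ i) = -∑ i ∈ Neg, c i * φ i := by
          rw [← Finset.sum_neg_distrib]
          exact Finset.sum_congr rfl fun i _ => by ring
        rw [this]; ring
      rw [hfsum, h1] at hfx; linarith
    by_cases hM0 : M = 0
    · have hcz : ∀ i, φ i < 0 → c i = 0 := by
        intro i hneg
        have hz := (Finset.sum_eq_zero_iff_of_nonneg (fun j hj =>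
          mul_nonneg (hc j) (by linarith [(hNegmem j).1 hj] : (0:ℝ) ≤ -φ j))).1
          (by rw [← hM]; exact hM0)
        have := hz i ((hNegmem i).2 hneg)
        rcases mul_eq_zero.1 this with h | h
        · exact h
        · exact absurd h (by linarith)
      refine ⟨Sum.elim (fun i => c i.1) 0, ?_, ?_⟩
      · rintro (i | pq)
        · exact hc i.1
        · exact le_refl 0
      · rw [Fintype.sum_sum_type]
        simp only [Sum.elim_inl, Sum.elim_inr, Pi.zero_apply, zero_smul,
          Finset.sum_const_zero, add_zero, hG]
        rw [← Finset.sum_subtype Pos hPosmem (fun i => c i • g i)]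
        refine (Finset.sum_subset (Finset.filter_subset _ _) ?_).symm
        intro i _ hi
        have : φ i < 0 := not_le.1 (fun hle => hi ((hPosmem i).2 hle))
        rw [hcz i this, zero_smul]
    · have hMpos : 0 < M := lt_of_le_of_ne hMnn (Ne.symm hM0)
      have hPpos : 0 < P := lt_of_lt_of_le hMpos hPM
      refine ⟨Sum.elim (fun i => c i.1 * (1 - M / P)) (fun pq => c pq.1.1 * c pq.2.1 / P),
        ?_, ?_⟩
      · rintro (i | pq)
        · simp only [Sum.elim_inl]
          apply mul_nonneg (hc i.1)
          have : M / P ≤ 1 := (div_le_one hPpos).2 hPM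
          linarith
        · simp only [Sum.elim_inr]
          exact div_nonneg (mul_nonneg (hc pq.1.1) (hc pq.2.1)) hPnn
      · rw [Fintype.sum_sum_type]
        simp only [Sum.elim_inl, Sum.elim_inr, hG]
        rw [Fintype.sum_prod_type]
        rw [← Finset.sum_subtype Pos hPosmem (fun i => (c i * (1 - M / P)) • g i)]
        rw [← Finset.sum_subtype Pos hPosmem (fun p => ∑ q : {q : ι // φ q < 0},
          (c p * c q.1 / P) • (φ p • g q.1 + (-φ q.1) • g p))]
        have hinner : ∀ p ∈ Pos, (∑ q : {q : ι // φ q < 0},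
            (c p * c q.1 / P) • (φ p • g q.1 + (-φ q.1) • g p)) =
            ∑ q ∈ Neg, (c p * c q / P) • (φ p • g q + (-φ q) • g p) := by
          intro p _
          rw [← Finset.sum_subtype Neg hNegmem
            (fun q => (c p * c q / P) • (φ p • g q + (-φ q) • g p))]
        rw [Finset.sum_congr rfl hinner]
        have expand : ∀ p ∈ Pos, ∀ q ∈ Neg, (c p * c q / P) • (φ p • g q + (-φ q) • g p)
            = ((c p * φ p) * (c q / P)) • g q + ((c q * (-φ q)) * (c p / P)) • g p := by
          intro p _ q _
          rw [smul_add, smul_smul, smul_smul]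
          congr 1
          · congr 1; ring
          · congr 1; ring
        rw [Finset.sum_congr rfl (fun p hp => Finset.sum_congr rfl (expand p hp))]
        rw [Finset.sum_congr rfl (fun p (hp : p ∈ Pos) => Finset.sum_add_distrib)]
        rw [Finset.sum_add_distrib]
        have T1 : ∑ p ∈ Pos, ∑ q ∈ Neg, ((c p * φ p) * (c q / P)) • g q
            = ∑ q ∈ Neg, c q • g q := by
          rw [Finset.sum_comm]
          refine Finset.sum_congr rfl fun q _ => ?_
          rw [← Finset.sum_smul, ← Finset.sum_mul, ← hP]
          congr 1
          field_simp
        have T2 : ∑ p ∈ Pos, ∑ q ∈ Neg, ((c q * (-φ q)) * (c p / P)) • g p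
            = ∑ p ∈ Pos, (c p * (M / P)) • g p := by
          refine Finset.sum_congr rfl fun p _ => ?_
          rw [← Finset.sum_smul, ← Finset.sum_mul, ← hM]
          congr 1
          ring
        rw [T1, T2, hsplitV (fun i => c i • g i)]
        have hcomb : ∑ p ∈ Pos, (c p * (1 - M / P)) • g p
            + ∑ p ∈ Pos, (c p * (M / P)) • g p = ∑ p ∈ Pos, c p • g p := by
          rw [← Finset.sum_add_distrib]
          refine Finset.sum_congr rfl fun p _ => ?_
          rw [← add_smul]
          congr 1
          ring
        rw [← hcomb]
        abel
  · rintro ⟨c, hc, rfl⟩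
    refine ⟨coneOf_sum_mem G c hc hGmem, ?_⟩
    rw [map_sum]
    exact Finset.sum_nonneg fun k _ => by
      rw [map_smul, smul_eq_mul]; exact mul_nonneg (hc k) (hGf k)

lemma mem_coneOf_basis {η : Type} [Fintype η] (b : Module.Basis η ℝ V) (x : V) :
    x ∈ coneOf (Sum.elim (fun i => b i) (fun i : η => -(b i))) := by
  classical
  refine ⟨Sum.elim (fun i => max (b.repr x i) 0) (fun i => max (-(b.repr x i)) 0), ?_, ?_⟩
  · rintro (i | i) <;> simp [le_max_right]
  · rw [Fintype.sum_sum_type]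
    simp only [Sum.elim_inl, Sum.elim_inr]
    rw [← Finset.sum_add_distrib]
    have key : ∀ i, max (b.repr x i) 0 • b i + max (-(b.repr x i)) 0 • (-(b i))
        = (b.repr x i) • b i := by
      intro i
      rw [smul_neg, ← sub_eq_add_neg, ← sub_smul, max_zero_sub_max_neg_zero_eq_self]
    rw [Finset.sum_congr rfl (fun i _ => key i)]
    exact (Module.Basis.sum_repr b x).symm

/-- Minkowski–Weyl: an H-polyhedral cone is finitely generated. -/
lemma weyl {ι0 : Type} [Fintype ι0] (g0 : ι0 → V) (hg0 : ∀ x : V, x ∈ coneOf g0)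
    (s : Finset (Module.Dual ℝ V)) :
    ∃ (ι : Type) (_ : Fintype ι) (g : ι → V),
      {x : V | ∀ f ∈ s, 0 ≤ f x} = coneOf g := by
  classical
  induction s using Finset.induction_on with
  | empty => exact ⟨ι0, inferInstance, g0, by ext x; simp [hg0 x]⟩
  | @insert a s ha ih =>
    obtain ⟨ι, _, g, hg⟩ := ih
    obtain ⟨κ, _, g', hg'⟩ := coneOf_halfspace g a
    refine ⟨κ, ‹_›, g', ?_⟩
    rw [← hg']
    ext x
    have hx : x ∈ coneOf g ↔ ∀ f ∈ s, 0 ≤ f x := by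
      rw [← hg]; exact Iff.rfl
    simp only [Set.mem_setOf_eq, Finset.forall_mem_insert, hx]
    tauto

lemma bilin_coords {n : ℕ} (B : LinearMap.BilinForm ℝ V) (b : Module.Basis (Fin (n+1)) ℝ V)
    (horth : ∀ i j, i ≠ j → B (b i) (b j) = 0) (h0 : B (b 0) (b 0) = 1)
    (hneg : ∀ i, i ≠ 0 → B (b i) (b i) = -1) (x y : V) :
    B x y = b.repr x 0 * b.repr y 0 - ∑ i ∈ univ.erase 0, b.repr x i * b.repr y i := by
  classical
  have step1 : B x y = ∑ i, (b.repr x i * b.repr y i) * B (b i) (b i) := by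
    conv_lhs => rw [← Module.Basis.sum_repr b x]
    rw [map_sum, LinearMap.sum_apply]
    refine Finset.sum_congr rfl fun i _ => ?_
    rw [map_smul, LinearMap.smul_apply]
    conv_lhs => rw [← Module.Basis.sum_repr b y, map_sum]
    rw [smul_eq_mul, Finset.mul_sum]
    rw [Finset.sum_eq_single i (fun j _ hji => by
      rw [map_smul, smul_eq_mul, horth i j (Ne.symm hji)]; ring) (by simp)]
    rw [map_smul, smul_eq_mul]; ring
  rw [step1, ← Finset.add_sum_erase _ _ (mem_univ (0 : Fin (n+1))), h0]
  have : ∑ i ∈ univ.erase 0, (b.repr x i * b.repr y i) * B (b i) (b i)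
      = -∑ i ∈ univ.erase 0, b.repr x i * b.repr y i := by
    rw [← Finset.sum_neg_distrib]
    refine Finset.sum_congr rfl fun i hi => ?_
    rw [hneg i (Finset.mem_erase.1 hi).1]; ring
  rw [this]; ring

lemma cauchy_aux (SX SH SXH a d u : ℝ) (hSX : 0 ≤ SX) (hSH : 0 ≤ SH)
    (hcs : SXH^2 ≤ SX * SH) (hax : SX < a^2) (hdh : SH < d^2)
    (hu : u = a * d - SXH) (hupos : 0 < u) : 0 < a * d := by nlinarith

/-- Two timelike vectors on the same side of a timelike vector pair positively. -/
lemma lorentz_pair {n : ℕ} (B : LinearMap.BilinForm ℝ V) (b : Module.Basis (Fin (n+1)) ℝ V)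
    (horth : ∀ i j, i ≠ j → B (b i) (b j) = 0) (h0 : B (b 0) (b 0) = 1)
    (hneg : ∀ i, i ≠ 0 → B (b i) (b i) = -1) (x y h : V)
    (hx : 0 < B x x) (hy : 0 < B y y) (hhh : 0 < B h h)
    (hxh : 0 < B x h) (hyh : 0 < B y h) : 0 < B x y := by
  classical
  set E := (univ : Finset (Fin (n+1))).erase 0 with hE
  obtain ⟨a, ha⟩ : ∃ a, b.repr x 0 = a := ⟨_, rfl⟩
  obtain ⟨c, hc⟩ : ∃ c, b.repr y 0 = c := ⟨_, rfl⟩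
  obtain ⟨d, hd⟩ : ∃ d, b.repr h 0 = d := ⟨_, rfl⟩
  obtain ⟨SX, hSX⟩ : ∃ s, ∑ i ∈ E, b.repr x i * b.repr x i = s := ⟨_, rfl⟩
  obtain ⟨SY, hSY⟩ : ∃ s, ∑ i ∈ E, b.repr y i * b.repr y i = s := ⟨_, rfl⟩
  obtain ⟨SH, hSH⟩ : ∃ s, ∑ i ∈ E, b.repr h i * b.repr h i = s := ⟨_, rfl⟩
  obtain ⟨SXH, hSXH⟩ : ∃ s, ∑ i ∈ E, b.repr x i * b.repr h i = s := ⟨_, rfl⟩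
  obtain ⟨SYH, hSYH⟩ : ∃ s, ∑ i ∈ E, b.repr y i * b.repr h i = s := ⟨_, rfl⟩
  obtain ⟨SXY, hSXY⟩ : ∃ s, ∑ i ∈ E, b.repr x i * b.repr y i = s := ⟨_, rfl⟩
  have sqf : ∀ z : V, ∑ i ∈ E, b.repr z i * b.repr z i = ∑ i ∈ E, (b.repr z i)^2 :=
    fun z => Finset.sum_congr rfl fun i _ => (sq (b.repr z i)).symm
  have nnX : 0 ≤ SX := by rw [← hSX, sqf]; exact Finset.sum_nonneg fun i _ => sq_nonneg _
  have nnY : 0 ≤ SY := by rw [← hSY, sqf]; exact Finset.sum_nonneg fun i _ => sq_nonneg _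
  have nnH : 0 ≤ SH := by rw [← hSH, sqf]; exact Finset.sum_nonneg fun i _ => sq_nonneg _
  have csxh : SXH^2 ≤ SX * SH := by
    rw [← hSXH, ← hSX, ← hSH, sqf, sqf]
    exact Finset.sum_mul_sq_le_sq_mul_sq E _ _
  have csyh : SYH^2 ≤ SY * SH := by
    rw [← hSYH, ← hSY, ← hSH, sqf, sqf]
    exact Finset.sum_mul_sq_le_sq_mul_sq E _ _
  have csxy : SXY^2 ≤ SX * SY := by
    rw [← hSXY, ← hSX, ← hSY, sqf, sqf]
    exact Finset.sum_mul_sq_le_sq_mul_sq E _ _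
  have cxx : B x x = a * a - SX := by
    rw [bilin_coords B b horth h0 hneg x x, ha, ← hE, hSX]
  have cyy : B y y = c * c - SY := by
    rw [bilin_coords B b horth h0 hneg y y, hc, ← hE, hSY]
  have chh : B h h = d * d - SH := by
    rw [bilin_coords B b horth h0 hneg h h, hd, ← hE, hSH]
  have cxh : B x h = a * d - SXH := by
    rw [bilin_coords B b horth h0 hneg x h, ha, hd, ← hE, hSXH]
  have cyh : B y h = c * d - SYH := by
    rw [bilin_coords B b horth h0 hneg y h, hc, hd, ← hE, hSYH]
  have cxy : B x y = a * c - SXY := by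
    rw [bilin_coords B b horth h0 hneg x y, ha, hc, ← hE, hSXY]
  rw [cxx] at hx; rw [cyy] at hy; rw [chh] at hhh; rw [cxh] at hxh; rw [cyh] at hyh
  rw [cxy]
  clear sqf hSX hSY hSH hSXH hSYH hSXY cxx cyy chh cxh cyh cxy ha hc hd horth h0 hneg hE E b
  have hax : SX < a^2 := by nlinarith
  have hcy : SY < c^2 := by nlinarith
  have hdh : SH < d^2 := by nlinarith
  have had : 0 < a * d := cauchy_aux SX SH SXH a d _ nnX nnH csxh hax hdh rfl hxh
  have hcd : 0 < c * d := cauchy_aux SY SH SYH c d _ nnY nnH csyh hcy hdh rfl hyh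
  have hd2 : 0 < d^2 := by nlinarith
  have hac : 0 < a * c := by nlinarith [mul_pos had hcd]
  nlinarith [csxy, nnX, nnY]

variable [TopologicalSpace V] [IsTopologicalAddGroup V] [ContinuousSMul ℝ V]

lemma mem_closure_solid (B : LinearMap.BilinForm ℝ V) (hsymm : ∀ x y, B x y = B y x)
    (h : V) (hh : 0 < B h h) (x : V) (hxx : 0 ≤ B x x) (hxh : 0 ≤ B x h) :
    x ∈ closure {z : V | 0 < B z z ∧ 0 < B z h} := by
  have hcont : Continuous fun t : ℝ => x + t • h :=
    continuous_const.add (continuous_id.smul continuous_const)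
  have htend : Filter.Tendsto (fun t : ℝ => x + t • h) (nhdsWithin 0 (Set.Ioi 0)) (nhds x) := by
    have h1 : Filter.Tendsto (fun t : ℝ => x + t • h) (nhds 0) (nhds (x + (0:ℝ) • h)) :=
      hcont.tendsto 0
    simpa using h1.mono_left nhdsWithin_le_nhds
  refine mem_closure_of_tendsto htend ?_
  filter_upwards [self_mem_nhdsWithin] with t ht
  have ht' : (0:ℝ) < t := ht
  have e1 : B (x + t • h) (x + t • h) = B x x + 2*t*(B x h) + t*t*(B h h) := by
    simp only [map_add, map_smul, LinearMap.add_apply, LinearMap.smul_apply, smul_eq_mul]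
    rw [hsymm h x]; ring
  have e2 : B (x + t • h) h = B x h + t * B h h := by
    simp only [map_add, map_smul, LinearMap.add_apply, LinearMap.smul_apply, smul_eq_mul]
  exact ⟨by rw [e1]; nlinarith [mul_pos (mul_pos ht' ht') hh, mul_nonneg ht'.le hxh],
    by rw [e2]; nlinarith [mul_pos ht' hh]⟩

end ConeAux

/-- A salient finite polyhedral closed convex cone N containing the closed
positive cone: every extremal ray not in ±(closure V⁺) has negative square,
and N is generated by closure V⁺ together with finitely many vectors of
negative square. -/
theorem polyhedral_cone_extremal_rays {V : Type*} [AddCommGroup V] [Module ℝ V]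
    [TopologicalSpace V] [IsTopologicalAddGroup V] [ContinuousSMul ℝ V]
    (n : ℕ) (hn : 2 ≤ n) (B : LinearMap.BilinForm ℝ V) (hB : IsLorentzian n B)
    (h : V) (hh : 0 < B h h)
    (Vplus : Set V) (hVp : Vplus = {x | 0 < B x x ∧ 0 < B x h})
    (N : Set V) (hNconv : Convex ℝ N) (hNclosed : IsClosed N)
    (hNcone : ∀ x ∈ N, ∀ t : ℝ, 0 ≤ t → t • x ∈ N)
    (hNsub : closure Vplus ⊆ N)
    (hsal : N ∩ (-N) = {(0 : V)})
    (hpoly : ∃ s : Finset (Module.Dual ℝ V), N = {x : V | ∀ f ∈ s, 0 ≤ f x}) :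
    (∀ r : V, r ∈ N → r ≠ 0 →
      (∀ a ∈ N, ∀ b ∈ N, a + b = r → ∃ t : ℝ, 0 ≤ t ∧ a = t • r) →
      r ∉ closure Vplus ∪ (-(closure Vplus)) → B r r < 0) ∧
    ∃ F : Finset V, (∀ v ∈ F, B v v < 0) ∧
      N = {x : V | ∃ y ∈ closure Vplus, ∃ c : V → ℝ,
        (∀ v, 0 ≤ c v) ∧ x = y + ∑ v ∈ F, c v • v} := by
  classical
  obtain ⟨hsymm, b, horth, hb0, hbneg⟩ := hB
  -- membership criterion for the closure of the positive cone
  have hclsolid : ∀ x : V, 0 ≤ B x x → 0 ≤ B x h → x ∈ closure Vplus := by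
    intro x h1 h2
    rw [hVp]
    exact mem_closure_solid B hsymm h hh x h1 h2
  have hclzero : (0 : V) ∈ closure Vplus := hclsolid 0 (by simp) (by simp)
  -- convexity of the positive cone
  have hVconv : Convex ℝ Vplus := by
    rw [hVp]
    rintro x ⟨hx1, hx2⟩ y ⟨hy1, hy2⟩ aa bb haa hbb hab
    rcases haa.eq_or_lt with rfl | haa'
    · obtain rfl : bb = 1 := by linarith
      simpa using ⟨hy1, hy2⟩
    rcases hbb.eq_or_lt with rfl | hbb'
    · obtain rfl : aa = 1 := by linarith
      simpa using ⟨hx1, hx2⟩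
    have hxy : 0 < B x y := lorentz_pair B b horth hb0 hbneg x y h hx1 hy1 hh hx2 hy2
    have e1 : B (aa • x + bb • y) (aa • x + bb • y)
        = aa*aa*(B x x) + 2*(aa*bb)*(B x y) + bb*bb*(B y y) := by
      simp only [map_add, map_smul, LinearMap.add_apply, LinearMap.smul_apply, smul_eq_mul]
      rw [hsymm y x]; ring
    have e2 : B (aa • x + bb • y) h = aa*(B x h) + bb*(B y h) := by
      simp only [map_add, map_smul, LinearMap.add_apply, LinearMap.smul_apply, smul_eq_mul]
    constructor
    · rw [e1]
      nlinarith [mul_pos haa' haa', mul_pos hbb' hbb', mul_pos haa' hbb']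
    · rw [e2]
      nlinarith [mul_pos haa' hx2, mul_pos hbb' hy2]
  have hclconv : Convex ℝ (closure Vplus) := hVconv.closure
  -- closure of V⁺ is stable under nonnegative scaling and addition
  have hclsmul : ∀ t : ℝ, 0 ≤ t → ∀ x ∈ closure Vplus, t • x ∈ closure Vplus := by
    intro t ht x hx
    rcases ht.eq_or_lt with rfl | ht'
    · simpa using hclzero
    have hmap : Continuous fun z : V => t • z := continuous_const.smul continuous_id
    have himg : (fun z : V => t • z) '' Vplus ⊆ Vplus := by
      rintro _ ⟨z, hz, rfl⟩
      rw [hVp] at hz ⊢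
      obtain ⟨hz1, hz2⟩ := hz
      have e1 : B (t • z) (t • z) = t*t*(B z z) := by
        simp only [map_smul, LinearMap.smul_apply, smul_eq_mul]; ring
      have e2 : B (t • z) h = t*(B z h) := by
        simp only [map_smul, LinearMap.smul_apply, smul_eq_mul]
      exact ⟨by rw [e1]; positivity, by rw [e2]; positivity⟩
    have h1 : t • x ∈ (fun z : V => t • z) '' closure Vplus := ⟨x, hx, rfl⟩
    have h2 := image_closure_subset_closure_image hmap h1
    exact closure_mono himg h2
  have hcladd : ∀ x ∈ closure Vplus, ∀ y ∈ closure Vplus, x + y ∈ closure Vplus := by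
    intro x hx y hy
    have hmid : (1/2 : ℝ) • x + (1/2 : ℝ) • y ∈ closure Vplus :=
      hclconv hx hy (by norm_num) (by norm_num) (by norm_num)
    have h2 : (2:ℝ) • ((1/2 : ℝ) • x + (1/2 : ℝ) • y) = x + y := by
      rw [smul_add, smul_smul, smul_smul]; norm_num
    have := hclsmul 2 (by norm_num) _ hmid
    rwa [h2] at this
  have hNadd : ∀ x ∈ N, ∀ y ∈ N, x + y ∈ N := by
    intro x hx y hy
    have hmid : (1/2 : ℝ) • x + (1/2 : ℝ) • y ∈ N :=
      hNconv hx hy (by norm_num) (by norm_num) (by norm_num)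
    have h2 : (2:ℝ) • ((1/2 : ℝ) • x + (1/2 : ℝ) • y) = x + y := by
      rw [smul_add, smul_smul, smul_smul]; norm_num
    have := hNcone _ hmid 2 (by norm_num)
    rwa [h2] at this
  -- vectors in N with nonnegative square lie in closure V⁺
  have hgood : ∀ v ∈ N, 0 ≤ B v v → v ∈ closure Vplus := by
    intro v hvN hge
    rcases le_or_gt 0 (B v h) with h1 | h1
    · exact hclsolid v hge h1
    · have hneg : -v ∈ closure Vplus := by
        refine hclsolid (-v) ?_ ?_
        · simpa using hge
        · simp only [map_neg, LinearMap.neg_apply]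
          linarith
      have hmem : v ∈ N ∩ (-N) := ⟨hvN, Set.mem_neg.2 (hNsub hneg)⟩
      rw [hsal] at hmem
      rw [Set.mem_singleton_iff.1 hmem]
      exact hclzero
  constructor
  · -- extremal rays outside ±closure V⁺ have negative square
    intro r hrN hrne _ hnot
    by_contra hge'
    have hge : 0 ≤ B r r := not_lt.1 hge'
    rcases le_or_gt 0 (B r h) with h1 | h1
    · exact hnot (Or.inl (hclsolid r hge h1))
    · refine hnot (Or.inr ?_)
      rw [Set.mem_neg]
      refine hclsolid (-r) (by simpa using hge) ?_
      simp only [map_neg, LinearMap.neg_apply]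
      linarith
  · -- finite generation
    obtain ⟨s, hs⟩ := hpoly
    obtain ⟨ι, _, g, hg⟩ := weyl (Sum.elim (fun i => b i) (fun i : Fin (n+1) => -(b i)))
      (mem_coneOf_basis b) s
    have hNg : N = coneOf g := hs.trans hg
    have hgN : ∀ i, g i ∈ N := fun i => hNg ▸ coneOf_gen g i
    set S : Finset ι := univ.filter (fun i => B (g i) (g i) < 0) with hSdef
    set F : Finset V := (Finset.univ.image g).filter (fun v => B v v < 0) with hFdef
    refine ⟨F, fun v hv => (Finset.mem_filter.1 hv).2, ?_⟩
    ext x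
    constructor
    · intro hx
      rw [hNg] at hx
      obtain ⟨c, hc, rfl⟩ := hx
      refine ⟨∑ i ∈ Sᶜ, c i • g i, ?_, fun v => ∑ i ∈ S.filter (fun i => g i = v), c i,
        fun v => Finset.sum_nonneg fun i _ => hc i, ?_⟩
      · refine Finset.sum_induction _ (· ∈ closure Vplus)
          (fun a b' ha hb' => hcladd a ha b' hb') hclzero ?_
        intro i hi
        have hge : 0 ≤ B (g i) (g i) := by
          have := Finset.mem_compl.1 hi
          rw [hSdef] at this
          simpa using not_lt.1 (by simpa using this)
        exact hclsmul (c i) (hc i) _ (hgood (g i) (hgN i) hge)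
      · have hFsum : ∑ v ∈ F, (∑ i ∈ S.filter (fun i => g i = v), c i) • v
            = ∑ i ∈ S, c i • g i := by
          have hmaps : ∀ i ∈ S, g i ∈ F := by
            intro i hi
            rw [hFdef, Finset.mem_filter]
            exact ⟨Finset.mem_image.2 ⟨i, Finset.mem_univ i, rfl⟩,
              (Finset.mem_filter.1 hi).2⟩
          rw [← Finset.sum_fiberwise_of_maps_to hmaps (fun i => c i • g i)]
          refine Finset.sum_congr rfl fun v _ => ?_
          rw [Finset.sum_smul]
          refine Finset.sum_congr rfl fun i hi => ?_
          rw [(Finset.mem_filter.1 hi).2]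
        rw [hFsum, Finset.sum_compl_add_sum S (fun i => c i • g i)]
    · rintro ⟨y, hy, c, hc, rfl⟩
      refine hNadd y (hNsub hy) _ ?_
      refine Finset.sum_induction _ (· ∈ N) (fun a b' ha hb' => hNadd a ha b' hb')
        (hNsub hclzero) ?_
      intro v hv
      obtain ⟨i, _, rfl⟩ := Finset.mem_image.1 (Finset.mem_filter.1 hv).1
      exact hNcone _ (hgN i) _ (hc _)
end

section
/- Let P be a simple convex polytope of dimension n ≥ 3 all of whose coefficients h_i of the h-polynomial are nonnegative and palindromic (h_i = h_{n−i}). Then the average number of vertices of the 2-dimensional faces of P satisfies A^{0,2} = (number of vertex–2-face incident pairs)/(number of 2-faces) ≤ 4 + 4/(n−2). -/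
/-!
By palindromy, `α₂ = Σ C(j,2) h_j = Σ C(n-j,2) h_j`, so `2 α₂ = Σ (C(j,2) + C(n-j,2)) h_j`.
The convex function `j ↦ C(j,2) + C(n-j,2)` is minimal at `j = n/2`, where it is at least
`n(n-2)/4`; as `h ≥ 0` this gives `n(n-2) α₀ ≤ 8 α₂`, and
`α₀ C(n,2) / α₂ ≤ 4(n-1)/(n-2) = 4 + 4/(n-2)`.
-/

open Finset

theorem sum_range_mul_reflect_of_palindromic {n : ℕ} {h : ℕ → ℝ}
    (hpal : ∀ i ≤ n, h i = h (n - i)) (f : ℕ → ℝ) :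
    ∑ j ∈ range (n + 1), f j * h j = ∑ j ∈ range (n + 1), f (n - j) * h j := by
  rw [← sum_range_reflect (fun j => f j * h j)]
  refine sum_congr rfl fun j hj => ?_
  have hjn : j ≤ n := Nat.lt_succ_iff.mp (mem_range.mp hj)
  rw [Nat.add_sub_cancel, ← hpal j hjn]

theorem mul_sub_two_le_four_mul_choose_two_add_choose_two {n j : ℕ} (hj : j ≤ n) :
    (n : ℝ) * (n - 2) ≤ 4 * ((j.choose 2 : ℝ) + ((n - j).choose 2 : ℝ)) := by
  rw [Nat.cast_choose_two, Nat.cast_choose_two, Nat.cast_sub hj]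
  nlinarith [sq_nonneg (2 * (j : ℝ) - n)]

theorem mul_sub_two_mul_sum_le_eight_mul_sum_choose_two {n : ℕ} {h : ℕ → ℝ}
    (hnn : ∀ i, 0 ≤ h i) (hpal : ∀ i ≤ n, h i = h (n - i)) :
    (n : ℝ) * (n - 2) * ∑ j ∈ range (n + 1), h j ≤
      8 * ∑ j ∈ range (n + 1), (j.choose 2 : ℝ) * h j := by
  have hsymm : 2 * ∑ j ∈ range (n + 1), (j.choose 2 : ℝ) * h j =
      ∑ j ∈ range (n + 1), ((j.choose 2 : ℝ) + ((n - j).choose 2 : ℝ)) * h j := by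
    rw [two_mul]
    nth_rewrite 2 [sum_range_mul_reflect_of_palindromic hpal]
    rw [← sum_add_distrib]
    simp only [add_mul]
  rw [show (8 : ℝ) = 4 * 2 by norm_num, mul_assoc 4 2, hsymm, mul_sum, mul_sum]
  refine sum_le_sum fun j hj => ?_
  rw [← mul_assoc]
  exact mul_le_mul_of_nonneg_right
    (mul_sub_two_le_four_mul_choose_two_add_choose_two (Nat.lt_succ_iff.mp (mem_range.mp hj)))
    (hnn j)

theorem average_vertices_of_two_faces_general (n : ℕ) (hn : 3 ≤ n) (h : ℕ → ℝ)
    (hnn : ∀ i, 0 ≤ h i)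
    (hpal : ∀ i ≤ n, h i = h (n - i))
    (α : ℕ → ℝ)
    (hα : ∀ i, α i = ∑ j ∈ Finset.range (n + 1), (j.choose i : ℝ) * h j) :
    α 0 * (n.choose 2 : ℝ) / α 2 ≤ 4 + 4 / ((n : ℝ) - 2) := by
  have hn2 : (0 : ℝ) < n - 2 := by
    have : (3 : ℝ) ≤ n := by exact_mod_cast hn
    linarith
  have hα0 : α 0 = ∑ j ∈ range (n + 1), h j := by simp [hα]
  have hα0_nonneg : 0 ≤ α 0 := hα0 ▸ sum_nonneg fun j _ => hnn j
  have hα2_nonneg : 0 ≤ α 2 := hα 2 ▸ sum_nonneg fun j _ => mul_nonneg (by positivity) (hnn j)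
  have hbound : (n : ℝ) * (n - 2) * α 0 ≤ 8 * α 2 := by
    rw [hα0, hα 2]
    exact mul_sub_two_mul_sum_le_eight_mul_sum_choose_two hnn hpal
  refine div_le_of_le_mul₀ hα2_nonneg (by positivity) ?_
  rw [Nat.cast_choose_two, show 4 + 4 / ((n : ℝ) - 2) = 4 * (n - 1) / (n - 2) by field_simp; ring,
    div_mul_eq_mul_div, le_div_iff₀ hn2]
  nlinarith [mul_le_mul_of_nonneg_left hbound (show (0 : ℝ) ≤ n - 1 by linarith)]

/-- For a simple polytope of dimension n ≥ 3 with nonnegative palindromic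
h-vector, the average number of vertices of 2-dimensional faces satisfies
A^{0,2} = α₀·C(n,2)/α₂ ≤ 4 + 4/(n−2). Here α_i = Σ_j C(j,i) h_j are the face
numbers, and the number of (vertex, 2-face) incidences is α₀·C(n,2) since
every vertex of a simple polytope lies in exactly C(n,2) two-faces. -/
theorem average_vertices_of_two_faces (n : ℕ) (hn : 3 ≤ n) (h : ℕ → ℝ)
    (hnn : ∀ i, 0 ≤ h i)
    (hpal : ∀ i ≤ n, h i = h (n - i))
    (hne : ∃ j ≤ n, 0 < h j)
    (α : ℕ → ℝ)
    (hα : ∀ i, α i = ∑ j ∈ Finset.range (n + 1), (j.choose i : ℝ) * h j) :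
    α 0 * (n.choose 2 : ℝ) / α 2 ≤ 4 + 4 / ((n : ℝ) - 2) :=
  average_vertices_of_two_faces_general n hn h hnn hpal α hα
end
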